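/- arXiv:2412.08613 — 3 statements merged into one kernel-verified Lean document; each statement's English description precedes it below -/
import Mathlib

section
/- (Key inequality of the fair primal dual method, Condat–Vũ case.) Let E be a real inner product space, f₁ : E → ℝ convex and differentiable with L-Lipschitz continuous gradient (L > 0), h : E → ℝ and φ : E → ℝ convex, and σ, τ > 0. Given x₀, y₀ ∈ E, suppose x̂ minimizes x ↦ h(x) + (1/(2σ))‖x − (x₀ − σ(y₀ + ∇f₁(x₀)))‖², and y' minimizes y ↦ φ(y) + (1/(2τ))‖y − (y₀ + τ(2x̂ − x₀))‖². Then for all x, y ∈ E: [f₁(x̂) + h(x̂) + φ(y')] − [f₁(x) + h(x) + φ(y)] − (⟨x − x̂, y'⟩ − ⟨y − y', x̂⟩) ≤ (1/2)‖(x − x₀, y − y₀)‖_Q² − (1/2)‖(x − x̂, y − y')‖_Q² − (1/2)‖(x̂ − x₀, y' − y₀)‖_M², where ‖(a,b)‖_Q² := (1/σ)‖a‖² − 2⟨a,b⟩ + (1/τ)‖b‖² and ‖(a,b)‖_M² := (1/σ − L)‖a‖² − 2⟨a,b⟩ + (1/τ)‖b‖². -/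
/-!
The prox step defining `xhat` yields the variational inequality
`h xhat - h x ≤ σ⁻¹ ⟪xhat - x₀, x - xhat⟫ + ⟪y₀ + ∇f₁ x₀, x - xhat⟫`, and the prox step defining `y'`
yields the analogous one for `φ`. Convexity of `f₁` at `x₀` together with the descent lemma gives
`f₁ xhat - f₁ x ≤ ⟪∇f₁ x₀, xhat - x⟫ + L/2 ‖xhat - x₀‖²`. On adding the three bounds the gradient
terms cancel, and what remains is the polarization identity of the quadratic form `‖·‖_Q²`.
-/

open RealInnerProductSpace Set Filter Topology AffineMap

lemma le_of_forall_mem_Ioc_le_add_mul {a b c : ℝ} (h : ∀ t ∈ Ioc (0 : ℝ) 1, a ≤ b + t * c) :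
    a ≤ b := by
  have hcont : Continuous (fun t : ℝ => b + t * c) := by fun_prop
  have hlim : Tendsto (fun t : ℝ => b + t * c) (𝓝[>] 0) (𝓝 b) :=
    (hcont.tendsto' 0 b (by simp)).mono_left nhdsWithin_le_nhds
  exact ge_of_tendsto hlim (eventually_of_mem (Ioc_mem_nhdsGT zero_lt_one) h)

section InnerProductSpace

variable {E : Type*} [NormedAddCommGroup E] [InnerProductSpace ℝ E]

section Gradient

variable [CompleteSpace E] {f : E → ℝ}

lemma HasGradientAt.hasDerivAt_comp_lineMap {a b g : E} {t : ℝ}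
    (hf : HasGradientAt f g (lineMap a b t)) :
    HasDerivAt (fun s : ℝ => f (lineMap a b s)) ⟪g, b - a⟫ t := by
  have := hf.hasFDerivAt.comp_hasDerivAt t hasDerivAt_lineMap
  simp only [InnerProductSpace.toDual_apply_apply] at this
  exact this

lemma ConvexOn.add_inner_gradient_le (hconv : ConvexOn ℝ univ f) {a g : E}
    (hf : HasGradientAt f g a) (b : E) :
    f a + ⟪g, b - a⟫ ≤ f b := by
  have hline : ConvexOn ℝ univ (fun s : ℝ => f (lineMap a b s)) :=
    hconv.comp_affineMap (lineMap a b)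
  have hslope := hline.le_slope_of_hasDerivAt (mem_univ 0) (mem_univ 1) zero_lt_one
    (HasGradientAt.hasDerivAt_comp_lineMap (by simpa using hf))
  simp only [slope_def_field, lineMap_apply_one, lineMap_apply_zero, sub_zero, div_one] at hslope
  linarith

lemma le_add_inner_gradient_add_sq_of_lipschitz {g : E → E} {L : ℝ}
    (hf : ∀ x, HasGradientAt f (g x) x) (hg : ∀ x y, ‖g x - g y‖ ≤ L * ‖x - y‖) (a b : E) :
    f b ≤ f a + ⟪g a, b - a⟫ + L / 2 * ‖b - a‖ ^ 2 := by
  have hderiv (t : ℝ) := (hf (lineMap a b t)).hasDerivAt_comp_lineMap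
  have hbound_deriv (t : ℝ) :
      HasDerivAt (fun s : ℝ => f a + s * ⟪g a, b - a⟫ + L / 2 * s ^ 2 * ‖b - a‖ ^ 2)
        (⟪g a, b - a⟫ + L * t * ‖b - a‖ ^ 2) t := by
    refine ((((hasDerivAt_id' t).mul_const _).const_add (f a)).add
      (((hasDerivAt_pow 2 t).const_mul (L / 2)).mul_const (‖b - a‖ ^ 2))).congr_deriv ?_
    ring
  have hderiv_le (t : ℝ) (ht : t ∈ Ico (0 : ℝ) 1) :
      ⟪g (lineMap a b t), b - a⟫ ≤ ⟪g a, b - a⟫ + L * t * ‖b - a‖ ^ 2 := by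
    have hdist : ‖lineMap a b t - a‖ = t * ‖b - a‖ := by
      rw [← dist_eq_norm, dist_lineMap_left, Real.norm_of_nonneg ht.1, dist_comm, dist_eq_norm]
    calc ⟪g (lineMap a b t), b - a⟫ = ⟪g a, b - a⟫ + ⟪g (lineMap a b t) - g a, b - a⟫ := by
          rw [inner_sub_left]; ring
      _ ≤ ⟪g a, b - a⟫ + ‖g (lineMap a b t) - g a‖ * ‖b - a‖ := by
          gcongr; exact real_inner_le_norm _ _
      _ ≤ ⟪g a, b - a⟫ + L * ‖lineMap a b t - a‖ * ‖b - a‖ := by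
          gcongr; exact hg _ _
      _ = ⟪g a, b - a⟫ + L * t * ‖b - a‖ ^ 2 := by rw [hdist]; ring
  have := image_le_of_deriv_right_le_deriv_boundary
    (fun t _ => (hderiv t).continuousAt.continuousWithinAt)
    (fun t _ => (hderiv t).hasDerivWithinAt) (by simp)
    (fun t _ => (hbound_deriv t).continuousAt.continuousWithinAt)
    (fun t _ => (hbound_deriv t).hasDerivWithinAt) hderiv_le (right_mem_Icc.2 zero_le_one)
  simpa using this

lemma ConvexOn.sub_le_inner_gradient_add_sq {g : E → E} {L : ℝ}
    (hconv : ConvexOn ℝ univ f) (hf : ∀ x, HasGradientAt f (g x) x)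
    (hg : ∀ x y, ‖g x - g y‖ ≤ L * ‖x - y‖) (a b c : E) :
    f b - f c ≤ ⟪g a, b - c⟫ + L / 2 * ‖b - a‖ ^ 2 := by
  have hlower := hconv.add_inner_gradient_le (hf a) c
  have hupper := le_add_inner_gradient_add_sq_of_lipschitz hf hg a b
  have hsplit : ⟪g a, b - c⟫ = ⟪g a, b - a⟫ - ⟪g a, c - a⟫ := by
    rw [← inner_sub_right, sub_sub_sub_cancel_right]
  linarith

end Gradient

/-- `z = prox_{σF}(a)`. -/
def IsProxPoint (F : E → ℝ) (σ : ℝ) (a z : E) : Prop :=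
  ∀ w, F z + 1 / (2 * σ) * ‖z - a‖ ^ 2 ≤ F w + 1 / (2 * σ) * ‖w - a‖ ^ 2

variable {F : E → ℝ} {σ : ℝ} {a z : E}

lemma IsProxPoint.sub_le_inner (hz : IsProxPoint F σ a z) (hF : ConvexOn ℝ univ F) (w : E) :
    F z - F w ≤ σ⁻¹ * ⟪z - a, w - z⟫ := by
  -- compare `z` with the points `(1 - t) • z + t • w`, divide by `t` and let `t → 0⁺`
  set c := 1 / (2 * σ)
  refine le_of_forall_mem_Ioc_le_add_mul (c := c * ‖w - z‖ ^ 2) fun t ht => ?_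
  have hconvex := hF.2 (mem_univ z) (mem_univ w) (sub_nonneg.2 ht.2) ht.1.le (sub_add_cancel 1 t)
  have hmin := hz ((1 - t) • z + t • w)
  have hshift : (1 - t) • z + t • w - a = (z - a) + t • (w - z) := by module
  rw [hshift, norm_add_sq_real, norm_smul, real_inner_smul_right, mul_pow, Real.norm_eq_abs,
    sq_abs] at hmin
  simp only [smul_eq_mul] at hconvex
  have hinv : σ⁻¹ = 2 * c := by ring
  refine le_of_mul_le_mul_left ?_ ht.1
  rw [hinv]
  linarith

lemma IsProxPoint.sub_le_inner_sub_inner {v : E} (hz : IsProxPoint F σ (a + σ • v) z)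
    (hσ : σ ≠ 0) (hF : ConvexOn ℝ univ F) (w : E) :
    F z - F w ≤ σ⁻¹ * ⟪z - a, w - z⟫ - ⟪v, w - z⟫ := by
  have hshift : z - (a + σ • v) = (z - a) - σ • v := sub_add_eq_sub_sub z a _
  have := hz.sub_le_inner hF w
  rwa [hshift, inner_sub_left, real_inner_smul_left, mul_sub, inv_mul_cancel_left₀ hσ] at this

end InnerProductSpace

theorem stmt_7_general {E : Type*} [NormedAddCommGroup E] [InnerProductSpace ℝ E] [CompleteSpace E]
    (f₁ h φ : E → ℝ) (f₁' : E → E) (L : ℝ)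
    (hf₁conv : ConvexOn ℝ Set.univ f₁)
    (hf₁diff : ∀ x, HasGradientAt f₁ (f₁' x) x)
    (hf₁lip : ∀ x y, ‖f₁' x - f₁' y‖ ≤ L * ‖x - y‖)
    (hhconv : ConvexOn ℝ Set.univ h)
    (hφconv : ConvexOn ℝ Set.univ φ)
    (σ τ : ℝ) (hσ : 0 < σ) (hτ : 0 < τ) (x₀ y₀ xhat y' : E)
    (hxhat : ∀ x : E,
      h xhat + 1 / (2 * σ) * ‖xhat - (x₀ - σ • (y₀ + f₁' x₀))‖ ^ 2 ≤
      h x + 1 / (2 * σ) * ‖x - (x₀ - σ • (y₀ + f₁' x₀))‖ ^ 2)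
    (hy' : ∀ y : E,
      φ y' + 1 / (2 * τ) * ‖y' - (y₀ + τ • (2 • xhat - x₀))‖ ^ 2 ≤
      φ y + 1 / (2 * τ) * ‖y - (y₀ + τ • (2 • xhat - x₀))‖ ^ 2) :
    ∀ x y : E,
      (f₁ xhat + h xhat + φ y') - (f₁ x + h x + φ y) - (⟪x - xhat, y'⟫ - ⟪y - y', xhat⟫) ≤
        1 / 2 * ((1 / σ) * ‖x - x₀‖ ^ 2 - 2 * ⟪x - x₀, y - y₀⟫ + (1 / τ) * ‖y - y₀‖ ^ 2)
        - 1 / 2 * ((1 / σ) * ‖x - xhat‖ ^ 2 - 2 * ⟪x - xhat, y - y'⟫ + (1 / τ) * ‖y - y'‖ ^ 2)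
        - 1 / 2 * ((1 / σ - L) * ‖xhat - x₀‖ ^ 2 - 2 * ⟪xhat - x₀, y' - y₀⟫
            + (1 / τ) * ‖y' - y₀‖ ^ 2) := by
  intro x y
  have hxprox : IsProxPoint h σ (x₀ + σ • -(y₀ + f₁' x₀)) xhat := by
    rwa [smul_neg, ← sub_eq_add_neg]
  have hx := hxprox.sub_le_inner_sub_inner hσ.ne' hhconv x
  have hy := IsProxPoint.sub_le_inner_sub_inner hy' hτ.ne' hφconv y
  have hf := hf₁conv.sub_le_inner_gradient_add_sq hf₁diff hf₁lip x₀ xhat x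
  simp only [one_div, two_smul, norm_sub_sq_real, inner_sub_left, inner_sub_right, inner_add_left,
    inner_neg_left, real_inner_self_eq_norm_sq, real_inner_comm] at hx hy hf ⊢
  linarith

theorem stmt_7 {E : Type*} [NormedAddCommGroup E] [InnerProductSpace ℝ E] [CompleteSpace E]
    (f₁ h φ : E → ℝ) (f₁' : E → E) (L : ℝ) (hL : 0 < L)
    (hf₁conv : ConvexOn ℝ Set.univ f₁)
    (hf₁diff : ∀ x, HasGradientAt f₁ (f₁' x) x)
    (hf₁lip : ∀ x y, ‖f₁' x - f₁' y‖ ≤ L * ‖x - y‖)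
    (hhconv : ConvexOn ℝ Set.univ h)
    (hφconv : ConvexOn ℝ Set.univ φ)
    (σ τ : ℝ) (hσ : 0 < σ) (hτ : 0 < τ) (x₀ y₀ xhat y' : E)
    (hxhat : ∀ x : E,
      h xhat + 1 / (2 * σ) * ‖xhat - (x₀ - σ • (y₀ + f₁' x₀))‖ ^ 2 ≤
      h x + 1 / (2 * σ) * ‖x - (x₀ - σ • (y₀ + f₁' x₀))‖ ^ 2)
    (hy' : ∀ y : E,
      φ y' + 1 / (2 * τ) * ‖y' - (y₀ + τ • (2 • xhat - x₀))‖ ^ 2 ≤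
      φ y + 1 / (2 * τ) * ‖y - (y₀ + τ • (2 • xhat - x₀))‖ ^ 2) :
    ∀ x y : E,
      (f₁ xhat + h xhat + φ y') - (f₁ x + h x + φ y) - (⟪x - xhat, y'⟫ - ⟪y - y', xhat⟫) ≤
        1 / 2 * ((1 / σ) * ‖x - x₀‖ ^ 2 - 2 * ⟪x - x₀, y - y₀⟫ + (1 / τ) * ‖y - y₀‖ ^ 2)
        - 1 / 2 * ((1 / σ) * ‖x - xhat‖ ^ 2 - 2 * ⟪x - xhat, y - y'⟫ + (1 / τ) * ‖y - y'‖ ^ 2)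
        - 1 / 2 * ((1 / σ - L) * ‖xhat - x₀‖ ^ 2 - 2 * ⟪xhat - x₀, y' - y₀⟫
            + (1 / τ) * ‖y' - y₀‖ ^ 2) :=
  stmt_7_general f₁ h φ f₁' L hf₁conv hf₁diff hf₁lip hhconv hφconv σ τ hσ hτ x₀ y₀ xhat y' hxhat hy'
end

section
/- (Theorem 6(ii), O(1/N) ergodic rate of the inexact fair primal dual method, Condat–Vũ case.) Let E be a real inner product space, f₁ : E → ℝ convex and differentiable with L-Lipschitz continuous gradient (L > 0), h : E → ℝ and φ : E → ℝ convex, σ, τ > 0 with στ < 1 − σL, and let (ε_k)_{k≥1} be a nonnegative summable sequence. Given x⁰, y⁰ ∈ E, define for k ≥ 0: x̂ᵏ⁺¹ minimizes x ↦ h(x) + (1/(2σ))‖x − (xᵏ − σ(yᵏ + ∇f₁(xᵏ)))‖²; yᵏ⁺¹ minimizes y ↦ φ(y) + (1/(2τ))‖y − (yᵏ + τ(2x̂ᵏ⁺¹ − xᵏ)) − dᵏ⁺¹‖² where the error vectors satisfy ‖dᵏ⁺¹‖ ≤ ε_{k+1} / max{1, ‖yᵏ⁺¹‖}; and xᵏ⁺¹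 := x̂ᵏ⁺¹. Let (x*, y*) be a saddle point of L(x,y) = f₁(x) + h(x) + ⟨x,y⟩ − φ(y), and set x̄_N := (1/N)·Σ_{k=1}^{N} x̂ᵏ, ȳ_N := (1/N)·Σ_{k=1}^{N} yᵏ. Then for all N ≥ 1: [f₁(x̄_N) + h(x̄_N) + φ(ȳ_N)] − [f₁(x*) + h(x*) + φ(y*)] − (⟨x* − x̄_N, y*⟩ − ⟨y* − ȳ_N, x*⟩) ≤ (1/N)·[ (1/2)((1/σ)‖x⁰ − x*‖² − 2⟨x⁰ − x*, y⁰ − y*⟩ + (1/τ)‖y⁰ − y*‖²) + (1/τ)(1 + ‖y*‖)·Σ_{k=1}^{∞} ε_k ]. -/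
/-!
Each iteration is a forward–backward step in `x` followed by an inexact proximal step in `y`.
The variational inequalities of the two proximal steps, convexity of `f₁` and the descent lemma
bound the Lagrangian gap `L(x̂ᵏ⁺¹, y*) - L(x*, yᵏ⁺¹)` by the decrease of the energy
`½‖(xᵏ - x*, yᵏ - y*)‖²_M` plus the error term `τ⁻¹⟪dᵏ⁺¹, yᵏ⁺¹ - y*⟫`; the step-size condition
`στ ≤ 1 - σL` is what lets Young's inequality absorb the cross term `⟪xᵏ - x̂ᵏ⁺¹, yᵏ - yᵏ⁺¹⟫`,
and the error control bounds the error term by `τ⁻¹(1 + ‖y*‖)εₖ₊₁`. Telescoping, and Jensen's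
inequality for the averages (the Lagrangian is convex–concave), give the `O(1/N)` rate.
-/

open RealInnerProductSpace Set Filter Topology

section

variable {E : Type*} [NormedAddCommGroup E] [InnerProductSpace ℝ E]

lemma two_mul_inner_sub_sub_eq (p q r : E) :
    2 * ⟪p - q, r - p⟫ = ‖q - r‖ ^ 2 - ‖p - r‖ ^ 2 - ‖p - q‖ ^ 2 := by
  have h := norm_add_sq_real (p - q) (r - p)
  rw [show p - q + (r - p) = r - q by abel, norm_sub_rev r q, norm_sub_rev r p] at h
  linarith

lemma real_inner_le_young {t : ℝ} (ht : 0 < t) (u v : E) :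
    ⟪u, v⟫ ≤ t / 2 * ‖u‖ ^ 2 + 1 / (2 * t) * ‖v‖ ^ 2 := by
  have h : t / 2 * ‖u‖ ^ 2 + 1 / (2 * t) * ‖v‖ ^ 2 - ⟪u, v⟫ = ‖t • u - v‖ ^ 2 / (2 * t) := by
    rw [norm_sub_sq_real, norm_smul, real_inner_smul_left, Real.norm_of_nonneg ht.le]
    field_simp
    ring
  have : 0 ≤ ‖t • u - v‖ ^ 2 / (2 * t) := by positivity
  linarith

/-- Half the squared norm of `(u, v)` in the Condat–Vũ metric `M = [[σ⁻¹, -1], [-1, τ⁻¹]]`. -/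
noncomputable def pdEnergy (σ τ : ℝ) (u v : E) : ℝ :=
  1 / (2 * σ) * ‖u‖ ^ 2 - ⟪u, v⟫ + 1 / (2 * τ) * ‖v‖ ^ 2

lemma pdEnergy_nonneg {σ τ : ℝ} (hσ : 0 < σ) (hτ : 0 < τ) (hστ : σ * τ ≤ 1) (u v : E) :
    0 ≤ pdEnergy σ τ u v := by
  have hyoung := real_inner_le_young (inv_pos.2 hσ) u v
  have hcoef : 1 / (2 * σ⁻¹) ≤ 1 / (2 * τ) := by
    rw [div_le_div_iff₀ (by positivity) (by positivity)]
    field_simp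
    linarith
  have := mul_le_mul_of_nonneg_right hcoef (sq_nonneg ‖v‖)
  unfold pdEnergy
  rw [show σ⁻¹ / 2 = 1 / (2 * σ) by ring] at hyoung
  linarith

lemma le_pdEnergy_sub_pdEnergy {σ τ L : ℝ} (hσ : 0 < σ) (hτ : 0 < τ)
    (hcond : σ * τ ≤ 1 - σ * L) (xk yk xh yp xs ys : E) :
    σ⁻¹ * ⟪xh - xk, xs - xh⟫ + ⟪yk, xs - xh⟫ + L / 2 * ‖xh - xk‖ ^ 2
      + τ⁻¹ * ⟪yp - yk, ys - yp⟫ - ⟪2 • xh - xk, ys - yp⟫ + ⟪xh, ys⟫ - ⟪xs, yp⟫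
    ≤ pdEnergy σ τ (xk - xs) (yk - ys) - pdEnergy σ τ (xh - xs) (yp - ys) := by
  have hx : σ⁻¹ * ⟪xh - xk, xs - xh⟫ = 1 / (2 * σ) *
      (‖xk - xs‖ ^ 2 - ‖xh - xs‖ ^ 2 - ‖xh - xk‖ ^ 2) := by
    rw [← two_mul_inner_sub_sub_eq]; field_simp
  have hy : τ⁻¹ * ⟪yp - yk, ys - yp⟫ = 1 / (2 * τ) *
      (‖yk - ys‖ ^ 2 - ‖yp - ys‖ ^ 2 - ‖yp - yk‖ ^ 2) := by
    rw [← two_mul_inner_sub_sub_eq]; field_simp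
  have hcross : ⟪yk, xs - xh⟫ - ⟪2 • xh - xk, ys - yp⟫ + ⟪xh, ys⟫ - ⟪xs, yp⟫
      = -⟪xk - xs, yk - ys⟫ + ⟪xh - xs, yp - ys⟫ + ⟪xk - xh, yk - yp⟫ := by
    simp only [inner_sub_left, inner_sub_right, two_smul, inner_add_left]
    linarith [real_inner_comm yk xs, real_inner_comm yk xh, real_inner_comm yk xk,
      real_inner_comm yp xk]
  have hyoung := real_inner_le_young hτ (xk - xh) (yk - yp)
  have hcoef : 0 ≤ (1 / (2 * σ) - L / 2 - τ / 2) * ‖xh - xk‖ ^ 2 := by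
    refine mul_nonneg ?_ (sq_nonneg _)
    rw [show 1 / (2 * σ) - L / 2 - τ / 2 = (1 - σ * L - σ * τ) / (2 * σ) by field_simp]
    exact div_nonneg (by linarith) (by positivity)
  rw [norm_sub_rev xk xh, norm_sub_rev yk yp] at hyoung
  unfold pdEnergy
  linarith

lemma ConvexOn.le_add_inner_of_isMinOn_prox {g : E → ℝ} (hg : ConvexOn ℝ univ g) {σ : ℝ}
    {a p : E} (hp : IsMinOn (fun z => g z + 1 / (2 * σ) * ‖z - a‖ ^ 2) univ p)
    (z : E) : g p ≤ g z + σ⁻¹ * ⟪p - a, z - p⟫ := by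
  set K := 1 / (2 * σ) * ‖z - p‖ ^ 2
  have hsmall : ∀ t ∈ Ioc (0 : ℝ) 1, g p - g z - σ⁻¹ * ⟪p - a, z - p⟫ ≤ t * K := by
    rintro t ⟨ht0, ht1⟩
    have hmin := isMinOn_univ_iff.1 hp (p + t • (z - p))
    have hconv := hg.2 (mem_univ p) (mem_univ z) (sub_nonneg.2 ht1) ht0.le (sub_add_cancel 1 t)
    rw [show (1 - t) • p + t • z = p + t • (z - p) by rw [sub_smul, one_smul, smul_sub]; abel,
      smul_eq_mul, smul_eq_mul] at hconv
    have hnorm : ‖p + t • (z - p) - a‖ ^ 2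
        = ‖p - a‖ ^ 2 + 2 * t * ⟪p - a, z - p⟫ + t ^ 2 * ‖z - p‖ ^ 2 := by
      rw [show p + t • (z - p) - a = (p - a) + t • (z - p) by abel, norm_add_sq_real,
        real_inner_smul_right, norm_smul, mul_pow, Real.norm_eq_abs, sq_abs]
      ring
    rw [hnorm] at hmin
    have : t * (g p - g z - σ⁻¹ * ⟪p - a, z - p⟫) ≤ t * (t * K) := by
      linear_combination hmin + hconv
    exact le_of_mul_le_mul_left this ht0
  have hlim : Tendsto (fun t : ℝ => t * K) (𝓝[>] 0) (𝓝 0) := by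
    simpa using ((tendsto_id (x := 𝓝 (0 : ℝ))).mul_const K).mono_left nhdsWithin_le_nhds
  have := ge_of_tendsto hlim (eventually_of_mem (Ioc_mem_nhdsGT one_pos) hsmall)
  linarith

lemma inner_le_of_norm_le_div_max_one {d y ys : E} {ε : ℝ} (hd : ‖d‖ ≤ ε / max 1 ‖y‖) :
    ⟪d, y - ys⟫ ≤ (1 + ‖ys‖) * ε := by
  set M := max 1 ‖y‖
  have hM : 0 < M := lt_of_lt_of_le one_pos (le_max_left _ _)
  have hdM : ‖d‖ * M ≤ ε := (le_div_iff₀ hM).1 hd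
  have hyM : ‖y‖ + ‖ys‖ ≤ M * (1 + ‖ys‖) := by
    nlinarith [le_max_left 1 ‖y‖, le_max_right 1 ‖y‖, norm_nonneg ys]
  calc ⟪d, y - ys⟫ ≤ ‖d‖ * (‖y‖ + ‖ys‖) :=
        (real_inner_le_norm _ _).trans (by gcongr; exact norm_sub_le _ _)
    _ ≤ ‖d‖ * (M * (1 + ‖ys‖)) := by gcongr
    _ = ‖d‖ * M * (1 + ‖ys‖) := by ring
    _ ≤ ε * (1 + ‖ys‖) := by gcongr
    _ = (1 + ‖ys‖) * ε := mul_comm _ _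

noncomputable def lagrangian (F φ : E → ℝ) (x y : E) : ℝ := F x + ⟪x, y⟫ - φ y

lemma lagrangian_average_sub_le {F φ : E → ℝ} (hF : ConvexOn ℝ univ F)
    (hφ : ConvexOn ℝ univ φ) {ι : Type*} {s : Finset ι} {n : ℕ} (hs : s.card = n) (hn : n ≠ 0)
    (x y : ι → E) (xs ys : E) :
    lagrangian F φ ((n : ℝ)⁻¹ • ∑ i ∈ s, x i) ys - lagrangian F φ xs ((n : ℝ)⁻¹ • ∑ i ∈ s, y i)
      ≤ (n : ℝ)⁻¹ * ∑ i ∈ s, (lagrangian F φ (x i) ys - lagrangian F φ xs (y i)) := by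
  have hw : ∑ _i ∈ s, (n : ℝ)⁻¹ = 1 := by simp [hs, hn]
  have hw0 : ∀ i ∈ s, (0 : ℝ) ≤ (n : ℝ)⁻¹ := fun _ _ => by positivity
  have hFx := hF.map_sum_le hw0 hw fun i _ => mem_univ (x i)
  have hφy := hφ.map_sum_le hw0 hw fun i _ => mem_univ (y i)
  simp only [← Finset.smul_sum, smul_eq_mul, ← Finset.mul_sum] at hFx hφy
  have hrhs : (n : ℝ)⁻¹ * ∑ i ∈ s, (lagrangian F φ (x i) ys - lagrangian F φ xs (y i))
      = (n : ℝ)⁻¹ * ∑ i ∈ s, F (x i) + ⟪(n : ℝ)⁻¹ • ∑ i ∈ s, x i, ys⟫ - φ ys - F xs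
        - ⟪xs, (n : ℝ)⁻¹ • ∑ i ∈ s, y i⟫ + (n : ℝ)⁻¹ * ∑ i ∈ s, φ (y i) := by
    simp only [lagrangian, Finset.sum_sub_distrib, Finset.sum_add_distrib, Finset.sum_const, hs,
      nsmul_eq_mul, real_inner_smul_left, real_inner_smul_right, sum_inner, inner_sum]
    field_simp
    ring
  rw [hrhs]
  unfold lagrangian
  linarith

variable [CompleteSpace E]

lemma HasGradientAt.hasDerivAt_comp_add_smul {f : E → ℝ} {g a v : E} {t : ℝ}
    (hf : HasGradientAt f g (a + t • v)) :
    HasDerivAt (fun s : ℝ => f (a + s • v)) ⟪g, v⟫ t := by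
  have hline : HasDerivAt (fun s : ℝ => a + s • v) v t := by
    simpa using ((hasDerivAt_id t).smul_const v).const_add a
  have h := hf.hasFDerivAt.comp_hasDerivAt t hline
  simp only [Function.comp_def, InnerProductSpace.toDual_apply_apply] at h
  exact h

lemma ConvexOn.add_inner_le_of_hasGradientAt {f : E → ℝ} (hf : ConvexOn ℝ univ f) {a g : E}
    (hfa : HasGradientAt f g a) (z : E) : f a + ⟪g, z - a⟫ ≤ f z := by
  have hline : ConvexOn ℝ univ (fun s : ℝ => f (a + s • (z - a))) := by
    have h : ConvexOn ℝ univ (f ∘ AffineMap.lineMap (k := ℝ) a z) := by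
      simpa using hf.comp_affineMap (AffineMap.lineMap a z)
    convert h using 1
    ext s
    simp [AffineMap.lineMap_apply_module', add_comm]
  have hderiv : HasDerivAt (fun s : ℝ => f (a + s • (z - a))) ⟪g, z - a⟫ 0 :=
    HasGradientAt.hasDerivAt_comp_add_smul (by simpa using hfa)
  have := hline.le_slope_of_hasDerivAt (mem_univ 0) (mem_univ 1) one_pos hderiv
  simp [slope_def_field] at this
  linarith

lemma le_add_inner_add_of_lipschitz_gradient {f : E → ℝ} {f' : E → E} {L : ℝ}
    (hf : ∀ x, HasGradientAt f (f' x) x) (hlip : ∀ x y, ‖f' x - f' y‖ ≤ L * ‖x - y‖)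
    (a b : E) : f b ≤ f a + ⟪f' a, b - a⟫ + L / 2 * ‖b - a‖ ^ 2 := by
  set v := b - a
  set g : ℝ → ℝ := fun t => f (a + t • v) - (t * ⟪f' a, v⟫ + L * ‖v‖ ^ 2 * t ^ 2 / 2)
  have hg : ∀ t, HasDerivAt g (⟪f' (a + t • v), v⟫ - (⟪f' a, v⟫ + L * ‖v‖ ^ 2 * t)) t := by
    intro t
    have hq : HasDerivAt (fun t : ℝ => t * ⟪f' a, v⟫ + L * ‖v‖ ^ 2 * t ^ 2 / 2)
        (⟪f' a, v⟫ + L * ‖v‖ ^ 2 * t) t := by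
      refine (((hasDerivAt_id' t).mul_const ⟪f' a, v⟫).add
        (((hasDerivAt_pow 2 t).const_mul (L * ‖v‖ ^ 2)).div_const 2)).congr_deriv ?_
      simp only [Nat.cast_ofNat, one_mul]
      ring
    exact (hf _).hasDerivAt_comp_add_smul.sub hq
  have hderiv_nonpos : ∀ t ∈ interior (Icc (0 : ℝ) 1),
      ⟪f' (a + t • v), v⟫ - (⟪f' a, v⟫ + L * ‖v‖ ^ 2 * t) ≤ 0 := by
    intro t ht
    rw [interior_Icc] at ht
    have hlipt : ‖f' (a + t • v) - f' a‖ ≤ L * (t * ‖v‖) := by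
      simpa [norm_smul, abs_of_pos ht.1] using hlip (a + t • v) a
    have : ⟪f' (a + t • v) - f' a, v⟫ ≤ L * ‖v‖ ^ 2 * t :=
      calc ⟪f' (a + t • v) - f' a, v⟫ ≤ ‖f' (a + t • v) - f' a‖ * ‖v‖ := real_inner_le_norm _ _
        _ ≤ L * (t * ‖v‖) * ‖v‖ := by gcongr
        _ = L * ‖v‖ ^ 2 * t := by ring
    rw [inner_sub_left] at this
    linarith
  have hanti : AntitoneOn g (Icc 0 1) :=
    antitoneOn_of_hasDerivWithinAt_nonpos (convex_Icc 0 1)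
      (fun t _ => (hg t).continuousAt.continuousWithinAt)
      (fun t _ => (hg t).hasDerivWithinAt) hderiv_nonpos
  have h01 := hanti (left_mem_Icc.2 zero_le_one) (right_mem_Icc.2 zero_le_one) zero_le_one
  simp only [g, zero_smul, add_zero, one_smul, v, add_sub_cancel] at h01
  linarith

lemma forwardBackward_le {f h : E → ℝ} {f' : E → E} {L σ : ℝ} (hf : ConvexOn ℝ univ f)
    (hf' : ∀ x, HasGradientAt f (f' x) x) (hlip : ∀ x y, ‖f' x - f' y‖ ≤ L * ‖x - y‖)
    (hh : ConvexOn ℝ univ h) (hσ : 0 < σ) {xk u xh : E}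
    (hxh : IsMinOn (fun z => h z + 1 / (2 * σ) * ‖z - (xk - σ • (u + f' xk))‖ ^ 2) univ xh)
    (z : E) :
    f xh + h xh ≤ f z + h z + σ⁻¹ * ⟪xh - xk, z - xh⟫ + ⟪u, z - xh⟫
      + L / 2 * ‖xh - xk‖ ^ 2 := by
  have hprox := hh.le_add_inner_of_isMinOn_prox hxh z
  have hexpand : σ⁻¹ * ⟪xh - (xk - σ • (u + f' xk)), z - xh⟫
      = σ⁻¹ * ⟪xh - xk, z - xh⟫ + ⟪u, z - xh⟫ + ⟪f' xk, z - xh⟫ := by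
    rw [show xh - (xk - σ • (u + f' xk)) = (xh - xk) + σ • (u + f' xk) by abel,
      inner_add_left, real_inner_smul_left, inner_add_left]
    field_simp
    ring
  have hdescent := le_add_inner_add_of_lipschitz_gradient hf' hlip xk xh
  have hgrad := hf.add_inner_le_of_hasGradientAt (hf' xk) z
  have hsplit : ⟪f' xk, z - xk⟫ = ⟪f' xk, z - xh⟫ + ⟪f' xk, xh - xk⟫ := by
    rw [← inner_add_right, sub_add_sub_cancel]
  linarith

lemma lagrangian_sub_le_pdEnergy_sub {f h φ : E → ℝ} {f' : E → E} {L σ τ : ℝ}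
    (hf : ConvexOn ℝ univ f) (hf' : ∀ x, HasGradientAt f (f' x) x)
    (hlip : ∀ x y, ‖f' x - f' y‖ ≤ L * ‖x - y‖) (hh : ConvexOn ℝ univ h)
    (hφ : ConvexOn ℝ univ φ) (hσ : 0 < σ) (hτ : 0 < τ) (hcond : σ * τ ≤ 1 - σ * L)
    {xk yk xh yp d : E}
    (hxh : IsMinOn (fun z => h z + 1 / (2 * σ) * ‖z - (xk - σ • (yk + f' xk))‖ ^ 2) univ xh)
    (hyp : IsMinOn (fun w => φ w + 1 / (2 * τ) * ‖w - (yk + τ • (2 • xh - xk)) - d‖ ^ 2)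
      univ yp)
    (xs ys : E) :
    lagrangian (f + h) φ xh ys - lagrangian (f + h) φ xs yp
      ≤ pdEnergy σ τ (xk - xs) (yk - ys) - pdEnergy σ τ (xh - xs) (yp - ys)
        + τ⁻¹ * ⟪d, yp - ys⟫ := by
  have hprimal := forwardBackward_le hf hf' hlip hh hσ hxh xs
  have hdual := hφ.le_add_inner_of_isMinOn_prox (a := yk + τ • (2 • xh - xk) + d)
    (by simpa only [sub_sub] using hyp) ys
  have hexpand : τ⁻¹ * ⟪yp - (yk + τ • (2 • xh - xk) + d), ys - yp⟫
      = τ⁻¹ * ⟪yp - yk, ys - yp⟫ - ⟪2 • xh - xk, ys - yp⟫ + τ⁻¹ * ⟪d, yp - ys⟫ := by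
    rw [show yp - (yk + τ • (2 • xh - xk) + d) = (yp - yk) - τ • (2 • xh - xk) - d by abel,
      inner_sub_left, inner_sub_left, real_inner_smul_left,
      show ⟪d, yp - ys⟫ = -⟪d, ys - yp⟫ by rw [← inner_neg_right, neg_sub]]
    field_simp
    ring
  have halg := le_pdEnergy_sub_pdEnergy hσ hτ hcond xk yk xh yp xs ys
  simp only [lagrangian, Pi.add_apply]
  linarith

end

lemma sum_range_le_add_tsum_of_le_sub_add {a e V : ℕ → ℝ}
    (h : ∀ k, a k ≤ V k - V (k + 1) + e k) {N : ℕ} (hV : 0 ≤ V N) (he : ∀ k, 0 ≤ e k)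
    (hs : Summable e) : ∑ k ∈ Finset.range N, a k ≤ V 0 + ∑' k, e k :=
  calc ∑ k ∈ Finset.range N, a k ≤ ∑ k ∈ Finset.range N, (V k - V (k + 1) + e k) :=
        Finset.sum_le_sum fun k _ => h k
    _ = V 0 - V N + ∑ k ∈ Finset.range N, e k := by
        rw [Finset.sum_add_distrib, Finset.sum_range_sub']
    _ ≤ V 0 + ∑' k, e k := by
        linarith [hs.sum_le_tsum (Finset.range N) fun k _ => he k]

theorem stmt_17_general {E : Type*} [NormedAddCommGroup E] [InnerProductSpace ℝ E] [CompleteSpace E]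
    (f₁ h φ : E → ℝ) (f₁' : E → E) (L : ℝ) (hL : 0 < L)
    (hf₁conv : ConvexOn ℝ Set.univ f₁)
    (hf₁diff : ∀ x, HasGradientAt f₁ (f₁' x) x)
    (hf₁lip : ∀ x y, ‖f₁' x - f₁' y‖ ≤ L * ‖x - y‖)
    (hhconv : ConvexOn ℝ Set.univ h)
    (hφconv : ConvexOn ℝ Set.univ φ)
    (σ τ : ℝ) (hσ : 0 < σ) (hτ : 0 < τ) (hcond : σ * τ < 1 - σ * L)
    (ε : ℕ → ℝ) (hεnonneg : ∀ k, 0 ≤ ε k) (hεsum : Summable ε)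
    (x y xhat d : ℕ → E)
    (hxhat : ∀ k, ∀ z : E,
      h (xhat (k + 1)) +
          1 / (2 * σ) * ‖xhat (k + 1) - (x k - σ • (y k + f₁' (x k)))‖ ^ 2 ≤
      h z + 1 / (2 * σ) * ‖z - (x k - σ • (y k + f₁' (x k)))‖ ^ 2)
    (hy : ∀ k, ∀ w : E,
      φ (y (k + 1)) +
          1 / (2 * τ) *
            ‖y (k + 1) - (y k + τ • (2 • xhat (k + 1) - x k)) - d (k + 1)‖ ^ 2 ≤
      φ w + 1 / (2 * τ) * ‖w - (y k + τ • (2 • xhat (k + 1) - x k)) - d (k + 1)‖ ^ 2)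
    (hd : ∀ k, ‖d (k + 1)‖ ≤ ε (k + 1) / max 1 ‖y (k + 1)‖)
    (hx : ∀ k, x (k + 1) = xhat (k + 1))
    (xs ys : E) :
    ∀ N : ℕ, 1 ≤ N →
      (f₁ ((N : ℝ)⁻¹ • ∑ k ∈ Finset.Icc 1 N, xhat k)
          + h ((N : ℝ)⁻¹ • ∑ k ∈ Finset.Icc 1 N, xhat k)
          + φ ((N : ℝ)⁻¹ • ∑ k ∈ Finset.Icc 1 N, y k))
        - (f₁ xs + h xs + φ ys)
        - (⟪xs - (N : ℝ)⁻¹ • ∑ k ∈ Finset.Icc 1 N, xhat k, ys⟫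
            - ⟪ys - (N : ℝ)⁻¹ • ∑ k ∈ Finset.Icc 1 N, y k, xs⟫) ≤
      (1 / N) *
        (1 / 2 *
            ((1 / σ) * ‖x 0 - xs‖ ^ 2 - 2 * ⟪x 0 - xs, y 0 - ys⟫
              + (1 / τ) * ‖y 0 - ys‖ ^ 2)
          + (1 / τ) * (1 + ‖ys‖) * ∑' k : ℕ, ε (k + 1)) := by
  intro N hN
  set V : ℕ → ℝ := fun k => pdEnergy σ τ (x k - xs) (y k - ys)
  set gap : ℕ → ℝ := fun j =>
    lagrangian (f₁ + h) φ (xhat j) ys - lagrangian (f₁ + h) φ xs (y j)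
  set C := τ⁻¹ * (1 + ‖ys‖)
  have hstep : ∀ k, gap (k + 1) ≤ V k - V (k + 1) + C * ε (k + 1) := by
    intro k
    have hone := lagrangian_sub_le_pdEnergy_sub hf₁conv hf₁diff hf₁lip hhconv hφconv hσ hτ
      hcond.le (isMinOn_univ_iff.2 (hxhat k)) (isMinOn_univ_iff.2 (hy k)) xs ys
    have herr : τ⁻¹ * ⟪d (k + 1), y (k + 1) - ys⟫ ≤ C * ε (k + 1) := by
      rw [mul_assoc]
      exact mul_le_mul_of_nonneg_left (inner_le_of_norm_le_div_max_one (hd k)) (by positivity)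
    simp only [gap, V, hx k]
    linarith
  have hsum := sum_range_le_add_tsum_of_le_sub_add hstep (N := N)
    (pdEnergy_nonneg hσ hτ (by linarith [mul_pos hσ hL]) _ _)
    (fun k => mul_nonneg (by positivity) (hεnonneg _))
    (((summable_nat_add_iff 1).2 hεsum).mul_left C)
  rw [tsum_mul_left] at hsum
  have havg := lagrangian_average_sub_le (hf₁conv.add hhconv) hφconv
    (s := Finset.Icc 1 N) (n := N) (by simp) (by omega) xhat y xs ys
  calc _ = lagrangian (f₁ + h) φ ((N : ℝ)⁻¹ • ∑ k ∈ Finset.Icc 1 N, xhat k) ys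
        - lagrangian (f₁ + h) φ xs ((N : ℝ)⁻¹ • ∑ k ∈ Finset.Icc 1 N, y k) := by
        simp only [lagrangian, Pi.add_apply, inner_sub_left, inner_sub_right, real_inner_comm xs]
        ring
    _ ≤ (N : ℝ)⁻¹ * ∑ k ∈ Finset.range N, gap (k + 1) := by
        rwa [Finset.range_eq_Ico, Finset.sum_Ico_add' gap, zero_add,
          ← Finset.Ico_add_one_right_eq_Icc]
    _ ≤ (N : ℝ)⁻¹ * (V 0 + C * ∑' k, ε (k + 1)) := by gcongr
    _ = _ := by simp only [V, C, pdEnergy]; ring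

theorem stmt_17 {E : Type*} [NormedAddCommGroup E] [InnerProductSpace ℝ E] [CompleteSpace E]
    (f₁ h φ : E → ℝ) (f₁' : E → E) (L : ℝ) (hL : 0 < L)
    (hf₁conv : ConvexOn ℝ Set.univ f₁)
    (hf₁diff : ∀ x, HasGradientAt f₁ (f₁' x) x)
    (hf₁lip : ∀ x y, ‖f₁' x - f₁' y‖ ≤ L * ‖x - y‖)
    (hhconv : ConvexOn ℝ Set.univ h)
    (hφconv : ConvexOn ℝ Set.univ φ)
    (σ τ : ℝ) (hσ : 0 < σ) (hτ : 0 < τ) (hcond : σ * τ < 1 - σ * L)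
    (ε : ℕ → ℝ) (hεnonneg : ∀ k, 0 ≤ ε k) (hεsum : Summable ε)
    (x y xhat d : ℕ → E)
    (hxhat : ∀ k, ∀ z : E,
      h (xhat (k + 1)) +
          1 / (2 * σ) * ‖xhat (k + 1) - (x k - σ • (y k + f₁' (x k)))‖ ^ 2 ≤
      h z + 1 / (2 * σ) * ‖z - (x k - σ • (y k + f₁' (x k)))‖ ^ 2)
    (hy : ∀ k, ∀ w : E,
      φ (y (k + 1)) +
          1 / (2 * τ) *
            ‖y (k + 1) - (y k + τ • (2 • xhat (k + 1) - x k)) - d (k + 1)‖ ^ 2 ≤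
      φ w + 1 / (2 * τ) * ‖w - (y k + τ • (2 • xhat (k + 1) - x k)) - d (k + 1)‖ ^ 2)
    (hd : ∀ k, ‖d (k + 1)‖ ≤ ε (k + 1) / max 1 ‖y (k + 1)‖)
    (hx : ∀ k, x (k + 1) = xhat (k + 1))
    (xs ys : E)
    (hsaddle : ∀ a b : E,
      f₁ xs + h xs + ⟪xs, b⟫ - φ b ≤ f₁ xs + h xs + ⟪xs, ys⟫ - φ ys ∧
      f₁ xs + h xs + ⟪xs, ys⟫ - φ ys ≤ f₁ a + h a + ⟪a, ys⟫ - φ ys) :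
    ∀ N : ℕ, 1 ≤ N →
      (f₁ ((N : ℝ)⁻¹ • ∑ k ∈ Finset.Icc 1 N, xhat k)
          + h ((N : ℝ)⁻¹ • ∑ k ∈ Finset.Icc 1 N, xhat k)
          + φ ((N : ℝ)⁻¹ • ∑ k ∈ Finset.Icc 1 N, y k))
        - (f₁ xs + h xs + φ ys)
        - (⟪xs - (N : ℝ)⁻¹ • ∑ k ∈ Finset.Icc 1 N, xhat k, ys⟫
            - ⟪ys - (N : ℝ)⁻¹ • ∑ k ∈ Finset.Icc 1 N, y k, xs⟫) ≤
      (1 / N) *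
        (1 / 2 *
            ((1 / σ) * ‖x 0 - xs‖ ^ 2 - 2 * ⟪x 0 - xs, y 0 - ys⟫
              + (1 / τ) * ‖y 0 - ys‖ ^ 2)
          + (1 / τ) * (1 + ‖ys‖) * ∑' k : ℕ, ε (k + 1)) :=
  stmt_17_general f₁ h φ f₁' L hL hf₁conv hf₁diff hf₁lip hhconv hφconv σ τ hσ hτ hcond ε hεnonneg
    hεsum x y xhat d hxhat hy hd hx xs ys
end

section
/- (Theorem 6(i), global convergence of the inexact fair primal dual method, Condat–Vũ case.) Let E be a finite-dimensional real inner product space (E = ℝⁿ), f₁ : E → ℝ convex and differentiable with L-Lipschitz continuous gradient (L > 0), h : E → ℝ and φ : E → ℝ convex, σ, τ > 0 with στ < 1 − σL, and let (ε_k)_{k≥1} be a nonnegative summable sequence. Given x⁰, y⁰ ∈ E, define for k ≥ 0: x̂ᵏ⁺¹ minimizes x ↦ h(x) + (1/(2σ))‖x − (xᵏ − σ(yᵏ + ∇f₁(xᵏ)))‖²; yᵏ⁺¹ minimizes y ↦ φ(y) + (1/(2τ))‖y − (yᵏ + τ(2x̂ᵏ⁺¹ − xᵏ)) − dᵏ⁺¹‖²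 where the error vectors satisfy ‖dᵏ⁺¹‖ ≤ ε_{k+1} / max{1, ‖yᵏ⁺¹‖}; and xᵏ⁺¹ := x̂ᵏ⁺¹. Assume L(x,y) = f₁(x) + h(x) + ⟨x,y⟩ − φ(y) admits at least one saddle point. Then there exists a saddle point (x*, y*) of L such that (xᵏ, yᵏ) converges to (x*, y*) as k → ∞. -/
/-
The fair Condat–Vũ iteration is a preconditioned proximal point method for the saddle-point
inclusion, in the metric `V(u, v) = ‖u‖²/(2σ) + ‖v‖²/(2τ) - ⟪u, v⟫`, which is positive definite
since `στ < 1`. Adding the optimality conditions of the two proximal steps, the saddle-point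
inequalities, the gradient inequality and the descent lemma for `f₁` gives, for every saddle
point `p`, `V(zᵏ⁺¹ - p) + W(zᵏ⁺¹ - zᵏ) ≤ V(zᵏ - p) + ⟪dᵏ⁺¹, yᵏ⁺¹ - p₂⟫/τ`, where `W` is `V`
with `1/σ` replaced by `1/σ - L`, positive definite since `στ < 1 - σL`. The error criterion
bounds the last term by `(1 + ‖p₂‖) εₖ₊₁/τ` whatever the size of `yᵏ⁺¹`. So `V(zᵏ - p)`
converges for every saddle point `p` and `zᵏ⁺¹ - zᵏ → 0`; the iterates are bounded, every
cluster point satisfies the limiting inclusions, hence is a saddle point, and the energy with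
respect to it tends to zero.
-/

open RealInnerProductSpace

/-- `(x̂, ŷ)` is a saddle point of the Lagrangian
`L(x, y) = f₁(x) + h(x) + ⟨x, y⟩ − φ(y)`. -/
def IsSaddlePoint {E : Type*} [NormedAddCommGroup E] [InnerProductSpace ℝ E]
    (f₁ h φ : E → ℝ) (p : E × E) : Prop :=
  ∀ x y : E,
    f₁ p.1 + h p.1 + ⟪p.1, y⟫ - φ y ≤ f₁ p.1 + h p.1 + ⟪p.1, p.2⟫ - φ p.2 ∧
    f₁ p.1 + h p.1 + ⟪p.1, p.2⟫ - φ p.2 ≤ f₁ x + h x + ⟪x, p.2⟫ - φ p.2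

open Filter Topology Set

lemma nonneg_of_forall_Ioc_nonneg_add_mul {A B : ℝ} (h : ∀ t ∈ Ioc (0 : ℝ) 1, 0 ≤ A + t * B) :
    0 ≤ A := by
  have hlim : Tendsto (fun t : ℝ => A + t * B) (𝓝[>] 0) (𝓝 A) := by
    have : Continuous fun t : ℝ => A + t * B := by fun_prop
    simpa using (this.tendsto 0).mono_left nhdsWithin_le_nhds
  exact ge_of_tendsto hlim (mem_of_superset (Ioc_mem_nhdsGT zero_lt_one) h)

lemma exists_tendsto_and_summable_of_quasiFejer {a w η : ℕ → ℝ} (ha : ∀ k, 0 ≤ a k)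
    (hw : ∀ k, 0 ≤ w k) (hη : Summable η)
    (h : ∀ k, a (k + 1) + w k ≤ a k + η k) :
    (∃ l, Tendsto a atTop (𝓝 l)) ∧ Summable w := by
  have hpartial := hη.hasSum.tendsto_sum_nat
  obtain ⟨M, hM⟩ := hpartial.bddAbove_range
  have hM' : ∀ n, ∑ j ∈ Finset.range n, η j ≤ M := fun n => hM (mem_range_self n)
  have htele : ∀ n, a n + ∑ j ∈ Finset.range n, w j ≤ a 0 + ∑ j ∈ Finset.range n, η j := by
    intro n
    induction n with
    | zero => simp
    | succ n ih => simp only [Finset.sum_range_succ]; linarith [h n]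
  have hanti : Antitone fun n => a n - ∑ j ∈ Finset.range n, η j := by
    refine antitone_nat_of_succ_le fun n => ?_
    simp only [Finset.sum_range_succ]
    linarith [h n, hw n]
  have hbdd : BddBelow (range fun n => a n - ∑ j ∈ Finset.range n, η j) :=
    ⟨-M, by rintro _ ⟨n, rfl⟩; linarith [ha n, hM' n]⟩
  refine ⟨⟨_, by simpa using (tendsto_atTop_ciInf hanti hbdd).add hpartial⟩, ?_⟩
  exact summable_of_sum_range_le (c := a 0 + M) hw fun n => by linarith [htele n, ha n, hM' n]

lemma norm_le_of_norm_le_div_max_one {F : Type*} [SeminormedAddGroup F] {d : F} {r ε : ℝ}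
    (hd : ‖d‖ ≤ ε / max 1 r) : ‖d‖ ≤ ε := by
  have hM : 1 ≤ max 1 r := le_max_left _ _
  rw [le_div_iff₀ (one_pos.trans_le hM)] at hd
  nlinarith [norm_nonneg d]

section

variable {E : Type*} [NormedAddCommGroup E] [InnerProductSpace ℝ E]

def IsSubgradient (f : E → ℝ) (x g : E) : Prop := ∀ z, f x + ⟪g, z - x⟫ ≤ f z

section Subgradient

lemma IsSubgradient.add {f₁ f₂ : E → ℝ} {x g₁ g₂ : E} (h₁ : IsSubgradient f₁ x g₁)
    (h₂ : IsSubgradient f₂ x g₂) : IsSubgradient (fun z => f₁ z + f₂ z) x (g₁ + g₂) := by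
  intro z
  have := h₁ z
  have := h₂ z
  rw [inner_add_left]
  linarith

lemma IsSubgradient.of_tendsto {ι : Type*} {l : Filter ι} [l.NeBot] {f : E → ℝ}
    (hf : Continuous f) {x g : ι → E} {x₀ g₀ : E} (hx : Tendsto x l (𝓝 x₀))
    (hg : Tendsto g l (𝓝 g₀)) (h : ∀ i, IsSubgradient f (x i) (g i)) :
    IsSubgradient f x₀ g₀ := fun z =>
  le_of_tendsto_of_tendsto' (((hf.tendsto x₀).comp hx).add (hg.inner (tendsto_const_nhds.sub hx)))
    tendsto_const_nhds fun i => h i z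

lemma isSaddlePoint_iff {f₁ h φ : E → ℝ} {p : E × E} :
    IsSaddlePoint f₁ h φ p ↔
      IsSubgradient (fun x => f₁ x + h x) p.1 (-p.2) ∧ IsSubgradient φ p.2 p.1 := by
  simp only [IsSaddlePoint, IsSubgradient, inner_neg_left, inner_sub_right, real_inner_comm p.2]
  constructor
  · intro hp
    exact ⟨fun x => by linarith [(hp x 0).2], fun y => by linarith [(hp 0 y).1]⟩
  · rintro ⟨hx, hy⟩ x y
    exact ⟨by linarith [hy y], by linarith [hx x]⟩

lemma ConvexOn.isSubgradient_of_prox {g : E → ℝ} (hg : ConvexOn ℝ univ g) {c : ℝ} {a u : E}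
    (hu : ∀ z, g u + 1 / (2 * c) * ‖u - a‖ ^ 2 ≤ g z + 1 / (2 * c) * ‖z - a‖ ^ 2) :
    IsSubgradient g u (c⁻¹ • (a - u)) := by
  intro z
  suffices 0 ≤ g z - g u - c⁻¹ * ⟪a - u, z - u⟫ by rw [real_inner_smul_left]; linarith
  refine nonneg_of_forall_Ioc_nonneg_add_mul (B := (2 * c)⁻¹ * ‖z - u‖ ^ 2) fun t ht => ?_
  have hmin := hu (u + t • (z - u))
  have hcvx : g (u + t • (z - u)) ≤ (1 - t) * g u + t * g z := by
    have := hg.2 (mem_univ u) (mem_univ z) (sub_nonneg.2 ht.2) ht.1.le (by ring)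
    rwa [show (1 - t) • u + t • z = u + t • (z - u) by module] at this
  have hexp : ‖u + t • (z - u) - a‖ ^ 2
      = ‖u - a‖ ^ 2 - 2 * t * ⟪a - u, z - u⟫ + t ^ 2 * ‖z - u‖ ^ 2 := by
    rw [show u + t • (z - u) - a = (u - a) + t • (z - u) by abel, norm_add_sq_real, norm_smul,
      real_inner_smul_right, ← neg_sub a u, inner_neg_left, Real.norm_eq_abs, abs_of_pos ht.1]
    ring
  rw [hexp] at hmin
  have : 0 ≤ t * (g z - g u - c⁻¹ * ⟪a - u, z - u⟫ + t * ((2 * c)⁻¹ * ‖z - u‖ ^ 2)) := by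
    linear_combination hmin + hcvx
  exact nonneg_of_mul_nonneg_right this ht.1

variable [CompleteSpace E]

lemma ConvexOn.isSubgradient_of_hasGradientAt {f : E → ℝ} {x f' : E} (hf : ConvexOn ℝ univ f)
    (hx : HasGradientAt f f' x) : IsSubgradient f x f' := by
  intro z
  let ℓ : ℝ →ᵃ[ℝ] E := AffineMap.lineMap x z
  have hline : HasDerivAt (f ∘ ℓ) ⟪f', z - x⟫ 0 := by
    have hx' : HasGradientAt f f' (ℓ 0) := by simpa [ℓ] using hx
    simpa using hx'.hasFDerivAt.comp_hasDerivAt (0 : ℝ) AffineMap.hasDerivAt_lineMap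
  have := (hf.comp_affineMap ℓ).le_slope_of_hasDerivAt (mem_univ 0) (mem_univ 1) zero_lt_one hline
  simp only [slope_def_field, Function.comp_apply, ℓ, AffineMap.lineMap_apply_one,
    AffineMap.lineMap_apply_zero, sub_zero, div_one] at this
  linarith

lemma le_add_inner_add_sq_of_lipschitz_gradient {f : E → ℝ} {f' : E → E} {L : ℝ}
    (hf : ∀ x, HasGradientAt f (f' x) x) (hL : ∀ x y, ‖f' x - f' y‖ ≤ L * ‖x - y‖) (x y : E) :
    f y ≤ f x + ⟪f' x, y - x⟫ + L / 2 * ‖y - x‖ ^ 2 := by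
  let ℓ : ℝ →ᵃ[ℝ] E := AffineMap.lineMap x y
  have hℓ : ∀ t, ℓ t - x = t • (y - x) := fun t => AffineMap.lineMap_vsub_left x y t
  have hline : ∀ t, HasDerivAt (f ∘ ℓ) ⟪f' (ℓ t), y - x⟫ t := fun t => by
    simpa using (hf (ℓ t)).hasFDerivAt.comp_hasDerivAt t AffineMap.hasDerivAt_lineMap
  have hbound : ∀ t : ℝ, HasDerivAt (fun t => f x + t * ⟪f' x, y - x⟫ + L / 2 * ‖y - x‖ ^ 2 * t ^ 2)
      (⟪f' x, y - x⟫ + L * t * ‖y - x‖ ^ 2) t := fun t => by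
    have h₁ : HasDerivAt (fun t : ℝ => t * ⟪f' x, y - x⟫) ⟪f' x, y - x⟫ t := by
      simpa using (hasDerivAt_id t).mul_const ⟪f' x, y - x⟫
    have h₂ : HasDerivAt (fun t : ℝ => t ^ 2) (2 * t) t := by simpa using hasDerivAt_pow 2 t
    exact ((h₁.const_add _).fun_add (h₂.const_mul _)).congr_deriv (by ring)
  have hderiv : ∀ t ∈ Ico (0 : ℝ) 1,
      ⟪f' (ℓ t), y - x⟫ ≤ ⟪f' x, y - x⟫ + L * t * ‖y - x‖ ^ 2 := fun t ht =>
    calc ⟪f' (ℓ t), y - x⟫ = ⟪f' x, y - x⟫ + ⟪f' (ℓ t) - f' x, y - x⟫ := by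
          rw [inner_sub_left]; ring
      _ ≤ ⟪f' x, y - x⟫ + ‖f' (ℓ t) - f' x‖ * ‖y - x‖ := by gcongr; exact real_inner_le_norm _ _
      _ ≤ ⟪f' x, y - x⟫ + L * ‖ℓ t - x‖ * ‖y - x‖ := by gcongr; exact hL _ _
      _ = ⟪f' x, y - x⟫ + L * t * ‖y - x‖ ^ 2 := by
          rw [hℓ, norm_smul, Real.norm_of_nonneg ht.1]; ring
  have key := image_le_of_deriv_right_le_deriv_boundary (a := 0) (b := 1)
    (fun t _ => (hline t).continuousAt.continuousWithinAt) (fun t _ => (hline t).hasDerivWithinAt)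
    (by simp [ℓ]) (fun t _ => (hbound t).continuousAt.continuousWithinAt)
    (fun t _ => (hbound t).hasDerivWithinAt) hderiv (right_mem_Icc.2 zero_le_one)
  simpa [ℓ] using key

end Subgradient

noncomputable def cvEnergy (a b : ℝ) (w : E × E) : ℝ :=
  a / 2 * ‖w.1‖ ^ 2 + b / 2 * ‖w.2‖ ^ 2 - ⟪w.1, w.2⟫

section cvEnergy

variable {a b : ℝ}

lemma continuous_cvEnergy : Continuous (cvEnergy (E := E) a b) := by
  unfold cvEnergy
  fun_prop

@[simp] lemma cvEnergy_zero : cvEnergy a b (0 : E × E) = 0 := by simp [cvEnergy]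

lemma exists_pos_mul_norm_sq_le_cvEnergy (hb : 0 < b) (hab : 1 < a * b) :
    ∃ δ > 0, ∀ w : E × E, δ * ‖w‖ ^ 2 ≤ cvEnergy a b w := by
  have ha : 0 < a := pos_of_mul_pos_left (one_pos.trans hab) hb.le
  refine ⟨(a * b - 1) / (2 * (a + b)), by apply div_pos <;> linarith, fun ⟨u, v⟩ => ?_⟩
  have hnorm : ‖(u, v)‖ ^ 2 ≤ ‖u‖ ^ 2 + ‖v‖ ^ 2 := by
    rw [Prod.norm_def]
    rcases max_cases ‖u‖ ‖v‖ with ⟨h, -⟩ | ⟨h, -⟩ <;> rw [h] <;> nlinarith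
  have hδ : 0 ≤ (a * b - 1) / (2 * (a + b)) := by apply div_nonneg <;> linarith
  -- `(a + b) (a s² + b t² - 2 s t) = (a b - 1) (s² + t²) + (a s - t)² + (b t - s)²`
  have key : (a * b - 1) / (2 * (a + b)) * (‖u‖ ^ 2 + ‖v‖ ^ 2)
      ≤ a / 2 * ‖u‖ ^ 2 + b / 2 * ‖v‖ ^ 2 - ‖u‖ * ‖v‖ := by
    rw [div_mul_eq_mul_div, div_le_iff₀ (by positivity)]
    nlinarith [sq_nonneg (a * ‖u‖ - ‖v‖), sq_nonneg (b * ‖v‖ - ‖u‖)]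
  simp only [cvEnergy]
  nlinarith [mul_le_mul_of_nonneg_left hnorm hδ, real_inner_le_norm u v]

lemma cvEnergy_nonneg (hb : 0 < b) (hab : 1 < a * b) (w : E × E) : 0 ≤ cvEnergy a b w := by
  obtain ⟨δ, hδ, hle⟩ := exists_pos_mul_norm_sq_le_cvEnergy (E := E) hb hab
  exact le_trans (by positivity) (hle w)

lemma tendsto_zero_of_tendsto_cvEnergy (hb : 0 < b) (hab : 1 < a * b) {ι : Type*} {l : Filter ι}
    {w : ι → E × E} (hw : Tendsto (fun i => cvEnergy a b (w i)) l (𝓝 0)) :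
    Tendsto w l (𝓝 0) := by
  obtain ⟨δ, hδ, hle⟩ := exists_pos_mul_norm_sq_le_cvEnergy (E := E) hb hab
  have hsq : Tendsto (fun i => ‖w i‖ ^ 2) l (𝓝 0) := by
    refine squeeze_zero (fun i => by positivity) (fun i => ?_) (by simpa using hw.div_const δ)
    rw [le_div_iff₀ hδ, mul_comm]
    exact hle (w i)
  rw [tendsto_zero_iff_norm_tendsto_zero]
  simpa using hsq.sqrt

lemma exists_tendsto_of_tendsto_cvEnergy [FiniteDimensional ℝ E] (hb : 0 < b)
    (hab : 1 < a * b) {S : Set (E × E)} {z : ℕ → E × E} (hS : S.Nonempty)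
    (hconv : ∀ p ∈ S, ∃ l, Tendsto (fun n => cvEnergy a b (z n - p)) atTop (𝓝 l))
    (hcluster : ∀ c (ψ : ℕ → ℕ), StrictMono ψ → Tendsto (z ∘ ψ) atTop (𝓝 c) → c ∈ S) :
    ∃ p ∈ S, Tendsto z atTop (𝓝 p) := by
  obtain ⟨δ, hδ, hle⟩ := exists_pos_mul_norm_sq_le_cvEnergy (E := E) hb hab
  obtain ⟨p₀, hp₀⟩ := hS
  obtain ⟨M, hM⟩ := (hconv p₀ hp₀).choose_spec.bddAbove_range
  have hbdd : Bornology.IsBounded (range z) := by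
    refine (Metric.isBounded_closedBall (x := p₀) (r := √(M / δ))).subset ?_
    rintro _ ⟨n, rfl⟩
    rw [Metric.mem_closedBall, dist_eq_norm]
    refine Real.le_sqrt_of_sq_le ?_
    rw [le_div_iff₀ hδ, mul_comm]
    exact (hle _).trans (hM (mem_range_self n))
  obtain ⟨c, -, ψ, hψ, hzψ⟩ := tendsto_subseq_of_bounded hbdd mem_range_self
  have hc := hcluster c ψ hψ hzψ
  obtain ⟨l, hl⟩ := hconv c hc
  have hl0 : l = 0 := by
    refine tendsto_nhds_unique (hl.comp hψ.tendsto_atTop) ?_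
    have := ((continuous_cvEnergy (a := a) (b := b)).tendsto 0).comp
      (tendsto_sub_nhds_zero_iff.2 hzψ)
    rwa [cvEnergy_zero] at this
  subst hl0
  exact ⟨c, hc, tendsto_sub_nhds_zero_iff.1 (tendsto_zero_of_tendsto_cvEnergy hb hab hl)⟩

end cvEnergy

lemma inner_sub_le_of_norm_le_div_max_one {d y q : E} {ε : ℝ} (hd : ‖d‖ ≤ ε / max 1 ‖y‖) :
    ⟪d, y - q⟫ ≤ (1 + ‖q‖) * ε := by
  set M := max 1 ‖y‖
  have hM : 1 ≤ M := le_max_left _ _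
  rw [le_div_iff₀ (one_pos.trans_le hM)] at hd
  calc ⟪d, y - q⟫ ≤ ‖d‖ * (‖y‖ + ‖q‖) :=
        (real_inner_le_norm _ _).trans (by gcongr; exact norm_sub_le _ _)
    _ ≤ ‖d‖ * (M * (1 + ‖q‖)) := by gcongr; nlinarith [le_max_right 1 ‖y‖, norm_nonneg q]
    _ ≤ (1 + ‖q‖) * ε := by nlinarith [norm_nonneg q]

/-- The optimality conditions of the two proximal steps of one iteration `zk ↦ zp` of the fair
Condat–Vũ method, with error `e` in the dual step. -/
structure IsCVStep (h φ : E → ℝ) (f₁' : E → E) (σ τ : ℝ) (zk zp : E × E) (e : E) : Prop where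
  primal : IsSubgradient h zp.1 (σ⁻¹ • (zk.1 - zp.1) - (zk.2 + f₁' zk.1))
  dual : IsSubgradient φ zp.2 (τ⁻¹ • (zk.2 - zp.2 + e) + (2 • zp.1 - zk.1))

section IsCVStep

variable {f₁ h φ : E → ℝ} {f₁' : E → E} {L σ τ : ℝ}

lemma isCVStep_of_prox (hh : ConvexOn ℝ univ h) (hφ : ConvexOn ℝ univ φ) (hσ : 0 < σ)
    (hτ : 0 < τ) {zk zp : E × E} {e : E}
    (hx : ∀ z, h zp.1 + 1 / (2 * σ) * ‖zp.1 - (zk.1 - σ • (zk.2 + f₁' zk.1))‖ ^ 2 ≤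
      h z + 1 / (2 * σ) * ‖z - (zk.1 - σ • (zk.2 + f₁' zk.1))‖ ^ 2)
    (hy : ∀ w, φ zp.2 + 1 / (2 * τ) * ‖zp.2 - (zk.2 + τ • (2 • zp.1 - zk.1)) - e‖ ^ 2 ≤
      φ w + 1 / (2 * τ) * ‖w - (zk.2 + τ • (2 • zp.1 - zk.1)) - e‖ ^ 2) :
    IsCVStep h φ f₁' σ τ zk zp e where
  primal := by
    convert hh.isSubgradient_of_prox hx using 1
    simp only [smul_sub, smul_add, smul_smul, inv_mul_cancel₀ hσ.ne', one_smul]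
    abel
  dual := by
    simp only [sub_sub] at hy
    convert hφ.isSubgradient_of_prox hy using 1
    simp only [smul_sub, smul_add, smul_smul, inv_mul_cancel₀ hτ.ne', one_smul]
    abel

variable [CompleteSpace E]

lemma IsCVStep.cvEnergy_add_le {zk zp : E × E} {e : E} (hs : IsCVStep h φ f₁' σ τ zk zp e)
    (hf₁ : ConvexOn ℝ univ f₁) (hgrad : ∀ x, HasGradientAt f₁ (f₁' x) x)
    (hlip : ∀ x y, ‖f₁' x - f₁' y‖ ≤ L * ‖x - y‖) {p : E × E} (hp : IsSaddlePoint f₁ h φ p) :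
    cvEnergy σ⁻¹ τ⁻¹ (zp - p) + cvEnergy (σ⁻¹ - L) τ⁻¹ (zp - zk)
      ≤ cvEnergy σ⁻¹ τ⁻¹ (zk - p) + τ⁻¹ * ⟪e, zp.2 - p.2⟫ := by
  obtain ⟨hpx, hpy⟩ := isSaddlePoint_iff.1 hp
  have h₁ := hs.primal p.1
  have h₂ := hs.dual p.2
  have h₃ := hpx zp.1
  have h₄ := hpy zp.2
  have h₅ := hf₁.isSubgradient_of_hasGradientAt (hgrad zk.1) p.1
  have h₆ := le_add_inner_add_sq_of_lipschitz_gradient hgrad hlip zk.1 zp.1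
  simp only [cvEnergy, Prod.fst_sub, Prod.snd_sub, norm_sub_sq_real, inner_sub_left,
    inner_sub_right, inner_add_left, inner_add_right, inner_neg_left, real_inner_smul_right,
    real_inner_self_eq_norm_sq, two_smul, real_inner_comm] at h₁ h₂ h₃ h₄ h₅ h₆ ⊢
  linear_combination h₁ + h₂ + h₃ + h₄ + h₅ + h₆

lemma IsCVStep.cvEnergy_add_le_of_norm_le_div_max_one {zk zp : E × E} {e : E} {ε : ℝ}
    (hs : IsCVStep h φ f₁' σ τ zk zp e) (hτ : 0 < τ) (he : ‖e‖ ≤ ε / max 1 ‖zp.2‖)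
    (hf₁ : ConvexOn ℝ univ f₁) (hgrad : ∀ x, HasGradientAt f₁ (f₁' x) x)
    (hlip : ∀ x y, ‖f₁' x - f₁' y‖ ≤ L * ‖x - y‖) {p : E × E} (hp : IsSaddlePoint f₁ h φ p) :
    cvEnergy σ⁻¹ τ⁻¹ (zp - p) + cvEnergy (σ⁻¹ - L) τ⁻¹ (zp - zk)
      ≤ cvEnergy σ⁻¹ τ⁻¹ (zk - p) + τ⁻¹ * (1 + ‖p.2‖) * ε := by
  have := mul_le_mul_of_nonneg_left (inner_sub_le_of_norm_le_div_max_one (q := p.2) he)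
    (inv_nonneg.2 hτ.le)
  linarith [hs.cvEnergy_add_le hf₁ hgrad hlip hp]

lemma isSaddlePoint_of_tendsto_isCVStep {ι : Type*} {l : Filter ι} [l.NeBot]
    (hf₁ : ConvexOn ℝ univ f₁) (hgrad : ∀ x, HasGradientAt f₁ (f₁' x) x) (hh : Continuous h)
    (hφ : Continuous φ) (hf₁' : Continuous f₁') {zk zp : ι → E × E} {e : ι → E} {c : E × E}
    (hs : ∀ i, IsCVStep h φ f₁' σ τ (zk i) (zp i) (e i)) (hzk : Tendsto zk l (𝓝 c))
    (hzp : Tendsto zp l (𝓝 c)) (he : Tendsto e l (𝓝 0)) :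
    IsSaddlePoint f₁ h φ c := by
  have hprimal := IsSubgradient.of_tendsto hh hzp.fst_nhds (((hzk.fst_nhds.sub
    hzp.fst_nhds).const_smul σ⁻¹).sub (hzk.snd_nhds.add ((hf₁'.tendsto _).comp hzk.fst_nhds)))
    fun i => (hs i).primal
  have hdual := IsSubgradient.of_tendsto hφ hzp.snd_nhds (((hzk.snd_nhds.sub
    hzp.snd_nhds).add he).const_smul τ⁻¹ |>.add ((hzp.fst_nhds.const_smul 2).sub hzk.fst_nhds))
    fun i => (hs i).dual
  simp only [sub_self, zero_add, smul_zero, zero_sub, two_smul, add_sub_cancel_right]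
    at hprimal hdual
  refine isSaddlePoint_iff.2 ⟨?_, hdual⟩
  simpa using (hf₁.isSubgradient_of_hasGradientAt (hgrad c.1)).add hprimal

end IsCVStep

end

theorem stmt_18_general {E : Type*} [NormedAddCommGroup E] [InnerProductSpace ℝ E]
    [FiniteDimensional ℝ E]
    (f₁ h φ : E → ℝ) (f₁' : E → E) (L : ℝ) (hL : 0 < L)
    (hf₁conv : ConvexOn ℝ Set.univ f₁)
    (hf₁diff : ∀ x, HasGradientAt f₁ (f₁' x) x)
    (hf₁lip : ∀ x y, ‖f₁' x - f₁' y‖ ≤ L * ‖x - y‖)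
    (hhconv : ConvexOn ℝ Set.univ h)
    (hφconv : ConvexOn ℝ Set.univ φ)
    (σ τ : ℝ) (hσ : 0 < σ) (hτ : 0 < τ) (hcond : σ * τ < 1 - σ * L)
    (ε : ℕ → ℝ) (hεsum : Summable ε)
    (x y xhat d : ℕ → E)
    (hxhat : ∀ k, ∀ z : E,
      h (xhat (k + 1)) +
          1 / (2 * σ) * ‖xhat (k + 1) - (x k - σ • (y k + f₁' (x k)))‖ ^ 2 ≤
      h z + 1 / (2 * σ) * ‖z - (x k - σ • (y k + f₁' (x k)))‖ ^ 2)
    (hy : ∀ k, ∀ w : E,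
      φ (y (k + 1)) +
          1 / (2 * τ) *
            ‖y (k + 1) - (y k + τ • (2 • xhat (k + 1) - x k)) - d (k + 1)‖ ^ 2 ≤
      φ w + 1 / (2 * τ) * ‖w - (y k + τ • (2 • xhat (k + 1) - x k)) - d (k + 1)‖ ^ 2)
    (hd : ∀ k, ‖d (k + 1)‖ ≤ ε (k + 1) / max 1 ‖y (k + 1)‖)
    (hx : ∀ k, x (k + 1) = xhat (k + 1))
    (hsaddle : ∃ p : E × E, IsSaddlePoint f₁ h φ p) :
    ∃ p : E × E, IsSaddlePoint f₁ h φ p ∧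
      Filter.Tendsto (fun k => (x k, y k)) Filter.atTop (nhds p) := by
  set z : ℕ → E × E := fun k => (x k, y k)
  have hτ' : 0 < τ⁻¹ := inv_pos.2 hτ
  have hW : 1 < (σ⁻¹ - L) * τ⁻¹ := by
    rwa [show (σ⁻¹ - L) * τ⁻¹ = (1 - σ * L) / (σ * τ) by field_simp, one_lt_div (by positivity)]
  have hV : 1 < σ⁻¹ * τ⁻¹ :=
    hW.trans_le (mul_le_mul_of_nonneg_right (sub_le_self _ hL.le) hτ'.le)
  have hstep : ∀ k, IsCVStep h φ f₁' σ τ (z k) (z (k + 1)) (d (k + 1)) := fun k =>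
    isCVStep_of_prox hhconv hφconv hσ hτ (by simpa only [z, hx] using hxhat k)
      (by simpa only [z, hx] using hy k)
  have hε : Summable fun k => ε (k + 1) := (summable_nat_add_iff 1).2 hεsum
  have hfejer : ∀ p, IsSaddlePoint f₁ h φ p →
      (∃ l, Tendsto (fun n => cvEnergy σ⁻¹ τ⁻¹ (z n - p)) atTop (𝓝 l)) ∧
        Summable fun k => cvEnergy (σ⁻¹ - L) τ⁻¹ (z (k + 1) - z k) := fun p hp =>
    exists_tendsto_and_summable_of_quasiFejer (fun _ => cvEnergy_nonneg hτ' hV _)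
      (fun _ => cvEnergy_nonneg hτ' hW _)
      (hε.mul_left (τ⁻¹ * (1 + ‖p.2‖))) fun k =>
        (hstep k).cvEnergy_add_le_of_norm_le_div_max_one hτ (hd k) hf₁conv hf₁diff hf₁lip hp
  obtain ⟨p₀, hp₀⟩ := hsaddle
  have hΔ : Tendsto (fun k => z (k + 1) - z k) atTop (𝓝 0) :=
    tendsto_zero_of_tendsto_cvEnergy hτ' hW (hfejer p₀ hp₀).2.tendsto_atTop_zero
  have hd₀ : Tendsto (fun k => d (k + 1)) atTop (𝓝 0) :=
    squeeze_zero_norm (fun k => norm_le_of_norm_le_div_max_one (hd k)) hε.tendsto_atTop_zero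
  have hf₁' : Continuous f₁' := (LipschitzWith.of_dist_le' (K := L) fun u v => by
    simpa only [dist_eq_norm] using hf₁lip u v).continuous
  exact exists_tendsto_of_tendsto_cvEnergy hτ' hV ⟨p₀, hp₀⟩ (fun p hp => (hfejer p hp).1)
    fun c ψ hψ hc => isSaddlePoint_of_tendsto_isCVStep hf₁conv hf₁diff
      (continuousOn_univ.1 (hhconv.continuousOn isOpen_univ))
      (continuousOn_univ.1 (hφconv.continuousOn isOpen_univ)) hf₁' (fun j => hstep (ψ j)) hc
      (by simpa using (hΔ.comp hψ.tendsto_atTop).add hc) (hd₀.comp hψ.tendsto_atTop)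

theorem stmt_18 {E : Type*} [NormedAddCommGroup E] [InnerProductSpace ℝ E]
    [FiniteDimensional ℝ E]
    (f₁ h φ : E → ℝ) (f₁' : E → E) (L : ℝ) (hL : 0 < L)
    (hf₁conv : ConvexOn ℝ Set.univ f₁)
    (hf₁diff : ∀ x, HasGradientAt f₁ (f₁' x) x)
    (hf₁lip : ∀ x y, ‖f₁' x - f₁' y‖ ≤ L * ‖x - y‖)
    (hhconv : ConvexOn ℝ Set.univ h)
    (hφconv : ConvexOn ℝ Set.univ φ)
    (σ τ : ℝ) (hσ : 0 < σ) (hτ : 0 < τ) (hcond : σ * τ < 1 - σ * L)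
    (ε : ℕ → ℝ) (hεnonneg : ∀ k, 0 ≤ ε k) (hεsum : Summable ε)
    (x y xhat d : ℕ → E)
    (hxhat : ∀ k, ∀ z : E,
      h (xhat (k + 1)) +
          1 / (2 * σ) * ‖xhat (k + 1) - (x k - σ • (y k + f₁' (x k)))‖ ^ 2 ≤
      h z + 1 / (2 * σ) * ‖z - (x k - σ • (y k + f₁' (x k)))‖ ^ 2)
    (hy : ∀ k, ∀ w : E,
      φ (y (k + 1)) +
          1 / (2 * τ) *
            ‖y (k + 1) - (y k + τ • (2 • xhat (k + 1) - x k)) - d (k + 1)‖ ^ 2 ≤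
      φ w + 1 / (2 * τ) * ‖w - (y k + τ • (2 • xhat (k + 1) - x k)) - d (k + 1)‖ ^ 2)
    (hd : ∀ k, ‖d (k + 1)‖ ≤ ε (k + 1) / max 1 ‖y (k + 1)‖)
    (hx : ∀ k, x (k + 1) = xhat (k + 1))
    (hsaddle : ∃ p : E × E, IsSaddlePoint f₁ h φ p) :
    ∃ p : E × E, IsSaddlePoint f₁ h φ p ∧
      Filter.Tendsto (fun k => (x k, y k)) Filter.atTop (nhds p) :=
  stmt_18_general f₁ h φ f₁' L hL hf₁conv hf₁diff hf₁lip hhconv hφconv σ τ hσ hτ hcond ε hεsum x y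
    xhat d hxhat hy hd hx hsaddle
end
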